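/- Suppose the model is block-additive: Y = ∑_{j=1}^k g_j(A_j), where the groups A_j = X_{C_j} are mutually independent and each g_j(A_j) is square-integrable. Then for every u ⊆ [1:p] such that u ⊄ C_j for every j ∈ [1:k], the Sobol index of Y vanishes: S_u = (1/Var(Y)) ∑_{v⊆u} (−1)^{|u|−|v|} Var(E(Y|X_v)) = 0. (Corollary 1) -/

import Mathlib

/-!
Write `σ(v)` for the σ-algebra generated by `X_v`. For a fixed block `j`, split `v` into
`v ∩ C_j` and `v \ C_j`: the second part is generated by the other blocks, hence is independent
of `σ(C_j)`, and adding an independent σ-algebra does not change a conditional expectation. So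
`E(Y | X_v) = ∑_j E(g_j | X_{v ∩ C_j})`, a sum of independent terms, and
`V_v = ∑_j Var E(g_j | X_{v ∩ C_j})`. If `u ⊄ C_j`, pick `i₀ ∈ u \ C_j`; the `j`-th summand does
not change when `i₀` is added to `v`, so its alternating sum over the subsets of `u` vanishes.
-/

open MeasureTheory ProbabilityTheory

section PiSystem

variable {Ω E : Type*} [NormedAddCommGroup E] [NormedSpace ℝ E]
  {m m0 : MeasurableSpace Ω} {μ : Measure Ω}

theorem setIntegral_eq_of_isPiSystem {S : Set (Set Ω)} (hm : m ≤ m0)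
    (h_gen : m = MeasurableSpace.generateFrom S) (h_pi : IsPiSystem S) {f g : Ω → E}
    (hf : Integrable f μ) (hg : Integrable g μ) (h_univ : ∫ x, f x ∂μ = ∫ x, g x ∂μ)
    (h_basic : ∀ t ∈ S, ∫ x in t, f x ∂μ = ∫ x in t, g x ∂μ) {t : Set Ω}
    (ht : MeasurableSet[m] t) : ∫ x in t, f x ∂μ = ∫ x in t, g x ∂μ := by
  induction t, ht using MeasurableSpace.induction_on_inter h_gen h_pi with
  | empty => simp
  | basic t ht => exact h_basic t ht
  | compl t ht h =>
    rw [setIntegral_compl (hm t ht) hf, setIntegral_compl (hm t ht) hg, h_univ, h]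
  | iUnion s hdisj hs h =>
    rw [integral_iUnion (fun i => hm _ (hs i)) hdisj hf.integrableOn,
      integral_iUnion (fun i => hm _ (hs i)) hdisj hg.integrableOn]
    exact tsum_congr h

end PiSystem

namespace MeasurableSpace

variable {Ω : Type*} {m₁ m₂ : MeasurableSpace Ω}

theorem isPiSystem_image2_inter :
    IsPiSystem (Set.image2 (· ∩ ·) {s | MeasurableSet[m₁] s} {s | MeasurableSet[m₂] s}) := by
  rintro _ ⟨s₁, hs₁, s₂, hs₂, rfl⟩ _ ⟨t₁, ht₁, t₂, ht₂, rfl⟩ -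
  exact ⟨s₁ ∩ t₁, hs₁.inter ht₁, s₂ ∩ t₂, hs₂.inter ht₂, Set.inter_inter_inter_comm _ _ _ _⟩

theorem sup_eq_generateFrom_image2_inter :
    m₁ ⊔ m₂ =
      generateFrom (Set.image2 (· ∩ ·) {s | MeasurableSet[m₁] s} {s | MeasurableSet[m₂] s}) := by
  refine le_antisymm (sup_le ?_ ?_) (generateFrom_le ?_)
  · exact fun s hs => measurableSet_generateFrom ⟨s, hs, Set.univ, .univ, Set.inter_univ s⟩
  · exact fun s hs => measurableSet_generateFrom ⟨Set.univ, .univ, s, hs, Set.univ_inter s⟩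
  · rintro _ ⟨s₁, hs₁, s₂, hs₂, rfl⟩
    exact (le_sup_left (a := m₁) _ hs₁).inter (le_sup_right (a := m₁) _ hs₂)

end MeasurableSpace

section CondExpIndep

variable {Ω : Type*} {m₁ m₂ mf m0 : MeasurableSpace Ω} {μ : Measure Ω} [IsFiniteMeasure μ]
  {f : Ω → ℝ}

theorem setIntegral_inter_eq_mul_of_indep (hmf : mf ≤ m0) (hm₂ : m₂ ≤ m0) (hindep : Indep mf m₂ μ)
    (hf : StronglyMeasurable[mf] f) (hfi : Integrable f μ) {s₁ s₂ : Set Ω}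
    (hs₁ : MeasurableSet[mf] s₁) (hs₂ : MeasurableSet[m₂] s₂) :
    ∫ x in s₁ ∩ s₂, f x ∂μ = μ.real s₂ * ∫ x in s₁, f x ∂μ := by
  have hce : μ[s₁.indicator f | m₂] =ᵐ[μ] fun _ => μ[s₁.indicator f] :=
    condExp_indep_eq hmf hm₂ (hf.indicator hs₁) hindep
  calc ∫ x in s₁ ∩ s₂, f x ∂μ = ∫ x in s₂, s₁.indicator f x ∂μ := by
        rw [setIntegral_indicator (hmf _ hs₁), Set.inter_comm]
    _ = ∫ x in s₂, (μ[s₁.indicator f | m₂]) x ∂μ :=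
        (setIntegral_condExp hm₂ (hfi.indicator (hmf _ hs₁)) hs₂).symm
    _ = ∫ _ in s₂, μ[s₁.indicator f] ∂μ := integral_congr_ae (ae_restrict_of_ae hce)
    _ = μ.real s₂ * ∫ x in s₁, f x ∂μ := by
        rw [setIntegral_const, smul_eq_mul, integral_indicator (hmf _ hs₁)]

theorem condExp_sup_indep_eq (hmf : mf ≤ m0) (hm₂ : m₂ ≤ m0) (h₁ : m₁ ≤ mf)
    (hindep : Indep mf m₂ μ) (hf : StronglyMeasurable[mf] f) (hfi : Integrable f μ) :
    μ[f | m₁ ⊔ m₂] =ᵐ[μ] μ[f | m₁] := by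
  have hm₁ : m₁ ≤ m0 := h₁.trans hmf
  have hm : m₁ ⊔ m₂ ≤ m0 := sup_le hm₁ hm₂
  refine (ae_eq_condExp_of_forall_setIntegral_eq hm hfi
    (fun s _ _ => integrable_condExp.integrableOn) (fun s hs _ => ?_)
    (stronglyMeasurable_condExp.mono (le_sup_left : m₁ ≤ m₁ ⊔ m₂)).aestronglyMeasurable).symm
  refine setIntegral_eq_of_isPiSystem hm MeasurableSpace.sup_eq_generateFrom_image2_inter
    MeasurableSpace.isPiSystem_image2_inter integrable_condExp hfi (integral_condExp hm₁) ?_ hs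
  rintro _ ⟨s₁, hs₁, s₂, hs₂, rfl⟩
  rw [setIntegral_inter_eq_mul_of_indep hmf hm₂ hindep (stronglyMeasurable_condExp.mono h₁)
      integrable_condExp (h₁ _ hs₁) hs₂,
    setIntegral_inter_eq_mul_of_indep hmf hm₂ hindep hf hfi (h₁ _ hs₁) hs₂,
    setIntegral_condExp hm₁ hfi hs₁]

end CondExpIndep

theorem Finset.sum_powerset_neg_one_pow_card_sub_mul_eq_zero {α R : Type*} [DecidableEq α]
    [CommRing R] {u : Finset α} {a : α} (ha : a ∈ u) (w : Finset α → R)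
    (hw : ∀ v, w (insert a v) = w v) :
    ∑ v ∈ u.powerset, (-1 : R) ^ (u.card - v.card) * w v = 0 := by
  rw [← insert_erase ha, sum_powerset_insert (notMem_erase a u), ← sum_add_distrib]
  refine sum_eq_zero fun v hv => ?_
  have hvu : v ⊆ u.erase a := mem_powerset.mp hv
  have hav : a ∉ v := fun h => notMem_erase a u (hvu h)
  have hcard : v.card ≤ (u.erase a).card := card_le_card hvu
  rw [hw, card_insert_of_notMem hav, card_insert_of_notMem (notMem_erase a u),
    Nat.add_sub_add_right, Nat.sub_add_comm hcard, pow_succ]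
  ring

section BlockAdditive

variable {Ω ι κ : Type*} [m0 : MeasurableSpace Ω] {μ : Measure Ω} [IsFiniteMeasure μ]
  [DecidableEq ι] {𝓕 : ι → MeasurableSpace Ω} {C : κ → Finset ι}

theorem condExp_iSup_eq_condExp_iSup_inter (h𝓕 : ∀ i, 𝓕 i ≤ m0)
    (hcover : ∀ i, ∃ j, i ∈ C j) (hindep : iIndep (fun j => ⨆ i ∈ C j, 𝓕 i) μ) {j : κ}
    {f : Ω → ℝ} (hf : StronglyMeasurable[⨆ i ∈ C j, 𝓕 i] f) (hfi : Integrable f μ)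
    (v : Finset ι) : μ[f | ⨆ i ∈ v, 𝓕 i] =ᵐ[μ] μ[f | ⨆ i ∈ v ∩ C j, 𝓕 i] := by
  have hB : ∀ j, ⨆ i ∈ C j, 𝓕 i ≤ m0 := fun j => iSup₂_le fun i _ => h𝓕 i
  have hsplit : ⨆ i ∈ v, 𝓕 i = (⨆ i ∈ v ∩ C j, 𝓕 i) ⊔ ⨆ i ∈ v \ C j, 𝓕 i := by
    rw [← Finset.iSup_union, Finset.union_comm, Finset.sdiff_union_inter]
  have hrest : ⨆ i ∈ v \ C j, 𝓕 i ≤ ⨆ j' ∈ ({j}ᶜ : Set κ), ⨆ i ∈ C j', 𝓕 i := by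
    refine iSup₂_le fun i hi => ?_
    obtain ⟨j', hj'⟩ := hcover i
    have hne : j' ≠ j := by rintro rfl; exact (Finset.mem_sdiff.mp hi).2 hj'
    exact le_iSup₂_of_le j' hne (le_iSup₂_of_le i hj' le_rfl)
  have hindep_rest : Indep (⨆ i ∈ C j, 𝓕 i) (⨆ i ∈ v \ C j, 𝓕 i) μ := by
    refine indep_of_indep_of_le_right ?_ hrest
    simpa using indep_iSup_of_disjoint hB hindep (disjoint_compl_right (a := ({j} : Set κ)))
  rw [hsplit]
  exact condExp_sup_indep_eq (hB j) (hrest.trans (iSup₂_le fun j' _ => hB j'))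
    (biSup_mono fun i hi => (Finset.mem_inter.mp hi).2) hindep_rest hf hfi

theorem variance_condExp_iSup_of_block_additive [Fintype κ] (h𝓕 : ∀ i, 𝓕 i ≤ m0)
    (hcover : ∀ i, ∃ j, i ∈ C j) (hindep : iIndep (fun j => ⨆ i ∈ C j, 𝓕 i) μ)
    {G : κ → Ω → ℝ} (hG : ∀ j, StronglyMeasurable[⨆ i ∈ C j, 𝓕 i] (G j))
    (hGL2 : ∀ j, MemLp (G j) 2 μ) {Y : Ω → ℝ} (hY : Y =ᵐ[μ] fun ω => ∑ j, G j ω)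
    (v : Finset ι) :
    variance (μ[Y | ⨆ i ∈ v, 𝓕 i]) μ = ∑ j, variance (μ[G j | ⨆ i ∈ v ∩ C j, 𝓕 i]) μ := by
  have hGi : ∀ j, Integrable (G j) μ := fun j => (hGL2 j).integrable one_le_two
  have hcondExp : μ[Y | ⨆ i ∈ v, 𝓕 i] =ᵐ[μ] ∑ j, μ[G j | ⨆ i ∈ v ∩ C j, 𝓕 i] := calc
    μ[Y | ⨆ i ∈ v, 𝓕 i] =ᵐ[μ] μ[∑ j, G j | ⨆ i ∈ v, 𝓕 i] := by
      rw [Finset.sum_fn]; exact condExp_congr_ae hY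
    _ =ᵐ[μ] ∑ j, μ[G j | ⨆ i ∈ v, 𝓕 i] := condExp_finsetSum (fun j _ => hGi j) _
    _ =ᵐ[μ] ∑ j, μ[G j | ⨆ i ∈ v ∩ C j, 𝓕 i] := eventuallyEq_sum fun j _ =>
      condExp_iSup_eq_condExp_iSup_inter h𝓕 hcover hindep (hG j) (hGi j) v
  rw [variance_congr hcondExp, IndepFun.variance_sum fun j _ => (hGL2 j).condExp one_le_two]
  intro j _ j' _ hjj'
  have hmeas : ∀ j, MeasurableSpace.comap (μ[G j | ⨆ i ∈ v ∩ C j, 𝓕 i]) inferInstance ≤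
      ⨆ i ∈ C j, 𝓕 i := fun j =>
    stronglyMeasurable_condExp.measurable.comap_le.trans
      (biSup_mono fun i hi => (Finset.mem_inter.mp hi).2)
  exact indep_of_indep_of_le_left (indep_of_indep_of_le_right (hindep.indep hjj') (hmeas j'))
    (hmeas j)

end BlockAdditive

theorem sobol_zero_block_additive_general
    {Ω : Type*} [MeasurableSpace Ω] (μ : Measure Ω) [IsProbabilityMeasure μ]
    {p k : ℕ} {E : Fin p → Type*} [∀ i, MeasurableSpace (E i)]
    (X : ∀ i, Ω → E i) (hX : ∀ i, Measurable (X i))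
    (C : Fin k → Finset (Fin p))
    (hpart : ∀ i : Fin p, ∃! j : Fin k, i ∈ C j)
    (hindep : iIndep
      (fun j : Fin k => ⨆ i ∈ C j, MeasurableSpace.comap (X i) inferInstance) μ)
    (G : Fin k → Ω → ℝ)
    (hGmeas : ∀ j : Fin k,
      StronglyMeasurable[⨆ i ∈ C j, MeasurableSpace.comap (X i) inferInstance] (G j))
    (hGL2 : ∀ j : Fin k, MemLp (G j) 2 μ)
    (Y : Ω → ℝ) (hsum : Y =ᵐ[μ] fun ω => ∑ j : Fin k, G j ω)
    (u : Finset (Fin p)) (hu : ∀ j : Fin k, ¬ u ⊆ C j) :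
    (1 / variance Y μ) * ∑ v ∈ u.powerset, (-1 : ℝ) ^ (u.card - v.card) *
        variance (μ[Y | ⨆ i ∈ v, MeasurableSpace.comap (X i) inferInstance]) μ = 0 := by
  have hvar := variance_condExp_iSup_of_block_additive (fun i => (hX i).comap_le)
    (fun i => (hpart i).exists) hindep hGmeas hGL2 hsum
  refine mul_eq_zero_of_right _ ?_
  simp_rw [hvar, Finset.mul_sum]
  rw [Finset.sum_comm]
  refine Finset.sum_eq_zero fun j _ => ?_
  obtain ⟨i₀, hi₀u, hi₀C⟩ := Finset.not_subset.mp (hu j)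
  exact Finset.sum_powerset_neg_one_pow_card_sub_mul_eq_zero hi₀u _ fun v => by
    rw [Finset.insert_inter_of_notMem hi₀C]

/-- Corollary 1: If the model is block-additive, `Y = ∑_{j=1}^k g_j(A_j)`,
with mutually independent groups `A_j = X_{C_j}` and `g_j(A_j)` square-integrable, then
for every `u ⊆ [1:p]` such that `u ⊄ C_j` for every `j`, the Sobol index of `Y`
vanishes: `S_u = (1/Var(Y)) ∑_{v⊆u} (-1)^{|u|-|v|} Var(E(Y|X_v)) = 0`. -/
theorem sobol_zero_block_additive
    {Ω : Type*} [MeasurableSpace Ω] (μ : Measure Ω) [IsProbabilityMeasure μ]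
    {p k : ℕ} {E : Fin p → Type*} [∀ i, MeasurableSpace (E i)]
    (X : ∀ i, Ω → E i) (hX : ∀ i, Measurable (X i))
    (C : Fin k → Finset (Fin p))
    (hpart : ∀ i : Fin p, ∃! j : Fin k, i ∈ C j)
    (hindep : iIndep
      (fun j : Fin k => ⨆ i ∈ C j, MeasurableSpace.comap (X i) inferInstance) μ)
    (G : Fin k → Ω → ℝ)
    (hGmeas : ∀ j : Fin k,
      StronglyMeasurable[⨆ i ∈ C j, MeasurableSpace.comap (X i) inferInstance] (G j))
    (hGL2 : ∀ j : Fin k, MemLp (G j) 2 μ)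
    (Y : Ω → ℝ) (hsum : Y =ᵐ[μ] fun ω => ∑ j : Fin k, G j ω)
    (hVarY : variance Y μ ≠ 0)
    (u : Finset (Fin p)) (hu : ∀ j : Fin k, ¬ u ⊆ C j) :
    (1 / variance Y μ) * ∑ v ∈ u.powerset, (-1 : ℝ) ^ (u.card - v.card) *
        variance (μ[Y | ⨆ i ∈ v, MeasurableSpace.comap (X i) inferInstance]) μ = 0 :=
  sobol_zero_block_additive_general μ X hX C hpart hindep G hGmeas hGL2 Y hsum u hu
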